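/- Let μ be a probability measure on F_q^d with support E, and suppose |E| ≤ c·q^d for some c ∈ (0,1). Then sup_{ξ ≠ 0} |μ̂(ξ)| ≥ sqrt(1−c) · |E|^{-1/2}. -/

import Mathlib

open Finset BigOperators Matrix

noncomputable def ft {F : Type*} [CommRing F] [Fintype F] {d : ℕ}
    (χ : AddChar F ℂ) (f : (Fin d → F) → ℂ) (ξ : Fin d → F) : ℂ :=
  ∑ x, χ (-(ξ ⬝ᵥ x)) * f x

/-!
By Plancherel, `∑_ξ |μ̂(ξ)|² = q^d ∑_x μ(x)²`, and by Cauchy–Schwarz on the support,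
`∑_x μ(x)² ≥ 1/|E|`. The frequency `ξ = 0` contributes only `|μ̂(0)|² = 1`, and each of the
fewer than `q^d` other frequencies at most `M²`, where `M = sup_{ξ ≠ 0} |μ̂(ξ)|`. Hence
`q^d/|E| - 1 ≤ q^d M²`, and `|E| ≤ c q^d` turns this into `(1 - c)/|E| ≤ M²`.
-/

section Orthogonality

variable {F ι : Type*} [Field F] [Fintype F] [Fintype ι] {χ : AddChar F ℂ}

theorem sum_addChar_dotProduct_eq_zero [DecidableEq ι] (hχ : χ ≠ 1) {v : ι → F} (hv : v ≠ 0) :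
    ∑ ξ : ι → F, χ (ξ ⬝ᵥ v) = 0 := by
  obtain ⟨t, ht⟩ := AddChar.ne_one_iff.1 hχ
  obtain ⟨i, hi⟩ := Function.ne_iff.1 hv
  set w : ι → F := Pi.single i (t * (v i)⁻¹)
  have hwv : w ⬝ᵥ v = t := by
    rw [single_dotProduct, mul_assoc, inv_mul_cancel₀ hi, mul_one]
  -- translating `ξ` by `w` multiplies the sum by `χ t ≠ 1`
  refine eq_zero_of_mul_eq_self_left ht ?_
  rw [Finset.mul_sum]
  refine Fintype.sum_equiv (Equiv.addLeft w) _ _ fun ξ ↦ ?_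
  simp only [Equiv.coe_addLeft, add_dotProduct, AddChar.map_add_eq_mul, hwv]

theorem sum_addChar_dotProduct [DecidableEq ι] [DecidableEq F] (hχ : χ ≠ 1) (v : ι → F) :
    ∑ ξ : ι → F, χ (ξ ⬝ᵥ v) = if v = 0 then (Fintype.card F : ℂ) ^ Fintype.card ι else 0 := by
  split_ifs with hv
  · simp [hv]
  · exact sum_addChar_dotProduct_eq_zero hχ hv

end Orthogonality

section FourierTransform

variable {F : Type*} [Field F] [Fintype F] {d : ℕ} {χ : AddChar F ℂ}

theorem ft_zero (f : (Fin d → F) → ℂ) : ft χ f 0 = ∑ x, f x := by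
  simp [ft]

theorem ft_mul_conj (f : (Fin d → F) → ℂ) (ξ : Fin d → F) :
    ft χ f ξ * starRingEnd ℂ (ft χ f ξ) =
      ∑ x, ∑ y, χ (ξ ⬝ᵥ (y - x)) * (f x * starRingEnd ℂ (f y)) := by
  rw [ft, map_sum, Finset.sum_mul_sum]
  refine Finset.sum_congr rfl fun x _ ↦ Finset.sum_congr rfl fun y _ ↦ ?_
  rw [map_mul, ← AddChar.map_neg_eq_conj, neg_neg, dotProduct_sub, sub_eq_neg_add,
    AddChar.map_add_eq_mul]
  ring

theorem sum_norm_ft_sq (hχ : χ ≠ 1) (f : (Fin d → F) → ℂ) :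
    ∑ ξ, ‖ft χ f ξ‖ ^ 2 = (Fintype.card F : ℝ) ^ d * ∑ x, ‖f x‖ ^ 2 := by
  classical
  apply Complex.ofReal_injective
  push_cast
  simp only [← Complex.mul_conj', ft_mul_conj]
  rw [Finset.sum_comm]
  refine (Finset.sum_congr rfl fun x _ ↦ ?_).trans (Finset.mul_sum _ _ _).symm
  rw [Finset.sum_comm]
  simp only [← Finset.sum_mul, sum_addChar_dotProduct hχ, sub_eq_zero, ite_mul, zero_mul,
    Finset.sum_ite_eq', Finset.mem_univ, if_true, Fintype.card_fin]

end FourierTransform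

theorem sum_sq_le_sq_add_card_mul_iSup_sq {α : Type*} [Fintype α]
    (g : α → ℝ) (hg : ∀ x, 0 ≤ g x) (a : α) :
    ∑ x, g x ^ 2 ≤ g a ^ 2 + Fintype.card α * (⨆ x : {x // x ≠ a}, g x) ^ 2 := by
  classical
  set M := ⨆ x : {x // x ≠ a}, g x
  have hbound : ∀ x ∈ univ.erase a, g x ^ 2 ≤ M ^ 2 := fun x hx ↦ pow_le_pow_left₀ (hg x)
      (le_ciSup (f := fun x : {x // x ≠ a} ↦ g x) (Set.finite_range _).bddAbove
        ⟨x, ne_of_mem_erase hx⟩) 2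
  calc ∑ x, g x ^ 2 = g a ^ 2 + ∑ x ∈ univ.erase a, g x ^ 2 :=
        (add_sum_erase _ _ (mem_univ a)).symm
    _ ≤ g a ^ 2 + #(univ.erase a) * M ^ 2 := by
        gcongr
        exact sum_le_card_nsmul _ _ _ hbound |>.trans_eq (nsmul_eq_mul _ _)
    _ ≤ g a ^ 2 + Fintype.card α * M ^ 2 := by
        gcongr
        exact_mod_cast (card_erase_le).trans_eq card_univ

theorem one_le_card_mul_sum_sq {α : Type*} [Fintype α] (μ : α → ℝ) (hμ1 : ∑ x, μ x = 1)
    (E : Finset α) (hE : ∀ x ∉ E, μ x ≤ 0) : 1 ≤ #E * ∑ x, μ x ^ 2 := by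
  have hmass : 1 ≤ ∑ x ∈ E, μ x :=
    hμ1.symm.le.trans (sum_le_sum_of_subset_of_nonpos' (subset_univ E) fun x _ hx ↦ hE x hx)
  calc (1 : ℝ) ≤ (∑ x ∈ E, μ x) ^ 2 := one_le_pow₀ hmass
    _ ≤ #E * ∑ x ∈ E, μ x ^ 2 := sq_sum_le_card_mul_sum_sq
    _ ≤ #E * ∑ x, μ x ^ 2 := by
        gcongr
        exact subset_univ E

theorem stmt_5_general {F : Type*} [Field F] [Fintype F] {d q : ℕ}
    (hq : Fintype.card F = q) (χ : AddChar F ℂ) (hχ : χ ≠ 1)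
    (μ : (Fin d → F) → ℝ) (hμ1 : ∑ x, μ x = 1)
    (E : Finset (Fin d → F)) (hE : ∀ x, x ∈ E ↔ 0 < μ x)
    (c : ℝ) (hEc : (E.card : ℝ) ≤ c * (q : ℝ) ^ d) :
    Real.sqrt (1 - c) / Real.sqrt (E.card : ℝ) ≤
      ⨆ ξ : {ξ : Fin d → F // ξ ≠ 0}, ‖ft χ (fun x => (μ x : ℂ)) ξ.1‖ := by
  set f : (Fin d → F) → ℂ := fun x ↦ (μ x : ℂ)
  set M := ⨆ ξ : {ξ : Fin d → F // ξ ≠ 0}, ‖ft χ f ξ.1‖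
  have hM : 0 ≤ M := Real.iSup_nonneg fun _ ↦ norm_nonneg _
  have hft0 : ‖ft χ f 0‖ = 1 := by simp [f, ft_zero, ← Complex.ofReal_sum, hμ1]
  have hplancherel : ∑ ξ, ‖ft χ f ξ‖ ^ 2 = q ^ d * ∑ x, μ x ^ 2 := by
    simpa [f, hq] using sum_norm_ft_sq hχ f
  have hsplit : ∑ ξ, ‖ft χ f ξ‖ ^ 2 ≤ 1 + q ^ d * M ^ 2 := by
    simpa [hft0, hq] using
      sum_sq_le_sq_add_card_mul_iSup_sq (fun ξ ↦ ‖ft χ f ξ‖) (fun _ ↦ norm_nonneg _) 0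
  have hmass := one_le_card_mul_sum_sq μ hμ1 E fun x hx ↦ not_lt.1 (mt (hE x).2 hx)
  have hq0 : (0 : ℝ) < q ^ d := pow_pos (Nat.cast_pos.2 (hq ▸ Fintype.card_pos)) d
  have hE0 : (0 : ℝ) < #E := lt_of_le_of_ne (Nat.cast_nonneg _) fun h ↦ by
    rw [← h, zero_mul] at hmass
    linarith
  have hkey : 1 - c ≤ M ^ 2 * #E := by
    refine le_of_mul_le_mul_left ?_ hq0
    calc q ^ d * (1 - c) ≤ q ^ d * (#E * ∑ x, μ x ^ 2) - #E := by
          linarith [mul_le_mul_of_nonneg_left hmass hq0.le]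
      _ = #E * (q ^ d * ∑ x, μ x ^ 2 - 1) := by ring
      _ ≤ #E * (q ^ d * M ^ 2) := by
          gcongr
          linarith
      _ = q ^ d * (M ^ 2 * #E) := by ring
  rw [div_le_iff₀ (Real.sqrt_pos.2 hE0), ← Real.sqrt_sq hM, ← Real.sqrt_mul (sq_nonneg M)]
  exact Real.sqrt_le_sqrt hkey

/-- If `μ` is a probability measure on `F_q^d` with support `E` and `|E| ≤ c q^d` for some
`c ∈ (0,1)`, then `sup_{ξ ≠ 0} |μ̂(ξ)| ≥ sqrt(1−c) · |E|^{-1/2}`. -/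
theorem stmt_5 {F : Type*} [Field F] [Fintype F] [DecidableEq F] {d q : ℕ}
    (hq : Fintype.card F = q) (χ : AddChar F ℂ) (hχ : χ ≠ 1)
    (μ : (Fin d → F) → ℝ) (hμ0 : ∀ x, 0 ≤ μ x) (hμ1 : ∑ x, μ x = 1)
    (E : Finset (Fin d → F)) (hE : ∀ x, x ∈ E ↔ 0 < μ x)
    (c : ℝ) (hc : c ∈ Set.Ioo (0 : ℝ) 1) (hEc : (E.card : ℝ) ≤ c * (q : ℝ) ^ d) :
    Real.sqrt (1 - c) / Real.sqrt (E.card : ℝ) ≤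
      ⨆ ξ : {ξ : Fin d → F // ξ ≠ 0}, ‖ft χ (fun x => (μ x : ℂ)) ξ.1‖ :=
  stmt_5_general hq χ hχ μ hμ1 E hE c hEc
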